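/- Suppose (r, r′) ∈ ℂ² \ (L_even ∪ L_odd). Then for every diagonal sequence s for (r, r′) there exists a unique admissible solution t for (r, r′) such that t(α, α) = s(α) for all α ∈ ℕ. -/

import Mathlib

noncomputable section

/-- ρ = (n-1)/2 as a complex number. -/
def rho (n : ℕ) : ℂ := ((n : ℂ) - 1) / 2

/-- ρ' = (n-2)/2 as a complex number. -/
def rho' (n : ℕ) : ℂ := ((n : ℂ) - 2) / 2

/-- A diagonal sequence for `(r, r')`. -/
def IsDiagSeq (n : ℕ) (r r' : ℂ) (s : ℕ → ℂ) : Prop :=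
  ∀ α : ℕ, (2*r' + 2*(α : ℂ) + (n : ℂ) - 2) * s α
    = (2*r + 2*(α : ℂ) + (n : ℂ) - 1) * s (α + 1)

/-- L_even. -/
def Leven (n : ℕ) : Set (ℂ × ℂ) :=
  {p | ∃ i j : ℕ, p.1 = -rho n - (i : ℂ) ∧ p.2 = -rho' n - (j : ℂ) ∧ ∃ k : ℕ, i = j + 2*k}

/-- L_odd. -/
def Lodd (n : ℕ) : Set (ℂ × ℂ) :=
  {p | ∃ i j : ℕ, p.1 = -rho n - (i : ℂ) ∧ p.2 = -rho' n - (j : ℂ) ∧ ∃ k : ℕ, i = j + 2*k + 1}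

/-- An admissible solution `t : ℕ × ℕ → ℂ` for `(r, r')`:
`t(α,α') = 0` when `α' > α` or `α − α'` is odd (equivalently `α + α'` is odd),
and the relations (R1), (R2) hold for all `α ≥ α'` with `α − α'` even.
The natural-subtraction index `α - 1` is harmless, since in (R1) its coefficient
`(α − α')` vanishes when `α = α'`, and in (R2) we have `α ≥ α' ≥ 1`. -/
def IsAdmissible (n : ℕ) (r r' : ℂ) (t : ℕ → ℕ → ℂ) : Prop :=
  (∀ α α' : ℕ, (α < α' ∨ Odd (α + α')) → t α α' = 0) ∧
  (∀ α α' : ℕ, α' ≤ α → Even (α + α') →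
    ((2*(α : ℂ) + (n : ℂ) - 2) * (2*r' + 2*(α' : ℂ) + (n : ℂ) - 2) * t α α'
      = ((α : ℂ) + (α' : ℂ) + (n : ℂ) - 2) * (2*r + 2*(α : ℂ) + (n : ℂ) - 1)
          * t (α + 1) (α' + 1)
        + ((α : ℂ) - (α' : ℂ)) * (2*r - 2*(α : ℂ) - (n : ℂ) + 3)
          * t (α - 1) (α' + 1)) ∧
    (1 ≤ α' →
      (2*(α : ℂ) + (n : ℂ) - 2) * (2*r' - 2*(α' : ℂ) - (n : ℂ) + 4) * t α α'
      = ((α : ℂ) - (α' : ℂ) + 1) * (2*r + 2*(α : ℂ) + (n : ℂ) - 1)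
          * t (α + 1) (α' - 1)
        + ((α : ℂ) + (α' : ℂ) + (n : ℂ) - 3) * (2*r - 2*(α : ℂ) - (n : ℂ) + 3)
          * t (α - 1) (α' - 1)))

/-!
Write `u k B = t (B + 2k) B` for the entries of `t` on its `k`-th even off-diagonal. Relation (R2)
at `(B + 1 + 2k, B + 1)` expresses `u (k+1) B` through level `k`, except at a column where
`2r + 2(B + 1 + 2k) + n - 1 = 0`; there (R1) at `(B + 2k + 2, B)` expresses it through level `k`
and `u (k+1) (B+1)`, which (R2) does determine. This division is legitimate because
`(r, r') ∉ L_even ∪ L_odd` forbids `2r + 2i + n - 1` and `2r' + 2j + n - 2` to vanish together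
for `j ≤ i`. So the diagonal determines `t`, and the same recursion produces a candidate.
The candidate satisfies (R2): at a degenerate column `m` the recurrence (D) forces `s` to vanish
up to `m`, hence so does everything that (R2) relates there. It satisfies (R1) by induction on
the level, because (R1) at level `k + 1` is, up to a nonzero factor, a linear combination of
(R1) at level `k` and (R2) at levels `k - 1` and `k`.
-/

namespace Admissible

section Levels

variable (x y c : ℂ)

/- In terms of `x = 2r + n - 1`, `y = 2r' + n - 2`, `c = n - 2` and the levels `u k B = t (B + 2k) B`,
`LevelR1 k B` is (R1) at `(B + 2k, B)` and `LevelR2 k B` is (R2) at `(B + 1 + 2k, B + 1)`. At `k = 0`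
the truncated index `k - 1` is harmless: its coefficient `2k` vanishes. -/
def LevelR1 (u : ℕ → ℕ → ℂ) (k B : ℕ) : Prop :=
  (2*((B:ℂ) + 2*k) + c) * (y + 2*B) * u k B
    = ((B:ℂ) + 2*k + B + c) * (x + 2*((B:ℂ) + 2*k)) * u k (B+1)
      + 2*(k:ℂ) * (x - 2*((B:ℂ) + 2*k) - 2*c) * u (k-1) (B+1)

def LevelR2 (u : ℕ → ℕ → ℂ) (k B : ℕ) : Prop :=
  (2*((B:ℂ) + 1 + 2*k) + c) * (y - 2*B - 2*c) * u k (B+1)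
    = (2*(k:ℂ) + 1) * (x + 2*((B:ℂ) + 1 + 2*k)) * u (k+1) B
      + ((B:ℂ) + 1 + 2*k + B + c) * (x - 2*((B:ℂ) + 1 + 2*k) - 2*c) * u k B

def solveR2 (k : ℕ) (w : ℕ → ℂ) (B : ℕ) : ℂ :=
  ((2*((B:ℂ) + 1 + 2*k) + c) * (y - 2*B - 2*c) * w (B+1)
      - ((B:ℂ) + 1 + 2*k + B + c) * (x - 2*((B:ℂ) + 1 + 2*k) - 2*c) * w B)
    / ((2*(k:ℂ) + 1) * (x + 2*((B:ℂ) + 1 + 2*k)))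

def solveR1 (k : ℕ) (w : ℕ → ℂ) (v : ℂ) (B : ℕ) : ℂ :=
  (((B:ℂ) + 2*(k+1) + B + c) * (x + 2*((B:ℂ) + 2*(k+1))) * v
      + 2*((k:ℂ) + 1) * (x - 2*((B:ℂ) + 2*(k+1)) - 2*c) * w (B+1))
    / ((2*((B:ℂ) + 2*(k+1)) + c) * (y + 2*B))

def nextLevel (k : ℕ) (w : ℕ → ℂ) (B : ℕ) : ℂ :=
  if x + 2*((B:ℂ) + 1 + 2*k) ≠ 0 then solveR2 x y c k w B
  else solveR1 x y c k w (solveR2 x y c k w (B+1)) B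

def levels (s : ℕ → ℂ) : ℕ → ℕ → ℂ
  | 0 => s
  | k + 1 => nextLevel x y c k (levels s k)

def Nondegenerate : Prop :=
  ∀ i j : ℕ, j ≤ i → x + 2*(i:ℂ) = 0 → y + 2*(j:ℂ) ≠ 0

variable {x y c}

theorem levelR2_iff {u : ℕ → ℕ → ℂ} {k B : ℕ} (hx : x + 2*((B:ℂ) + 1 + 2*k) ≠ 0) :
    LevelR2 x y c u k B ↔ u (k+1) B = solveR2 x y c k (u k) B := by
  have hk : 2*(k:ℂ) + 1 ≠ 0 := by exact_mod_cast (2*k).succ_ne_zero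
  rw [LevelR2, solveR2, eq_div_iff (mul_ne_zero hk hx)]
  constructor <;> intro h <;> linear_combination -h

theorem levelR1_succ_iff {u : ℕ → ℕ → ℂ} {k B : ℕ}
    (hD : (2*((B:ℂ) + 2*(k+1)) + c) * (y + 2*B) ≠ 0) :
    LevelR1 x y c u (k+1) B ↔ u (k+1) B = solveR1 x y c k (u k) (u (k+1) (B+1)) B := by
  rw [LevelR1, solveR1, eq_div_iff hD, Nat.add_sub_cancel]
  push_cast
  constructor <;> intro h <;> linear_combination h

theorem nextLevel_of_ne {k B : ℕ} {w : ℕ → ℂ} (hx : x + 2*((B:ℂ) + 1 + 2*k) ≠ 0) :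
    nextLevel x y c k w B = solveR2 x y c k w B :=
  if_pos hx

theorem nextLevel_of_eq {k B : ℕ} {w : ℕ → ℂ} (hx : x + 2*((B:ℂ) + 1 + 2*k) = 0) :
    nextLevel x y c k w B = solveR1 x y c k w (solveR2 x y c k w (B+1)) B :=
  if_neg (not_not.2 hx)

theorem nextColumn_ne_zero {k B : ℕ} (hx : x + 2*((B:ℂ) + 1 + 2*k) = 0) :
    x + 2*(((B+1 : ℕ):ℂ) + 1 + 2*k) ≠ 0 := by
  push_cast
  intro h
  have : (2:ℂ) = 0 := by linear_combination h - hx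
  norm_num at this

theorem denomR1_ne_zero (hB : Nondegenerate x y) (hc : ∀ m : ℕ, (m:ℂ) + c ≠ 0) {k B : ℕ}
    (hx : x + 2*((B:ℂ) + 1 + 2*k) = 0) : (2*((B:ℂ) + 2*(k+1)) + c) * (y + 2*B) ≠ 0 :=
  mul_ne_zero (fun h => hc (2*B + 4*k + 4) (by push_cast; linear_combination h))
    (hB (B + 1 + 2*k) B (by omega) (by push_cast; exact hx))

theorem eq_levels (hB : Nondegenerate x y) (hc : ∀ m : ℕ, (m:ℂ) + c ≠ 0) {u : ℕ → ℕ → ℂ}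
    (h1 : ∀ k B, LevelR1 x y c u k B) (h2 : ∀ k B, LevelR2 x y c u k B) :
    u = levels x y c (u 0) := by
  funext k
  induction k with
  | zero => rfl
  | succ k ih =>
    rw [levels, ← ih]
    funext B
    by_cases hx : x + 2*((B:ℂ) + 1 + 2*k) = 0
    · rw [nextLevel_of_eq hx, (levelR1_succ_iff (denomR1_ne_zero hB hc hx)).1 (h1 (k+1) B),
        (levelR2_iff (nextColumn_ne_zero hx)).1 (h2 k (B+1))]
    · rw [nextLevel_of_ne hx, (levelR2_iff hx).1 (h2 k B)]

theorem diagSeq_eq_zero_of_le (hB : Nondegenerate x y) {s : ℕ → ℂ}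
    (hs : ∀ B : ℕ, (y + 2*(B:ℂ)) * s B = (x + 2*(B:ℂ)) * s (B+1))
    {m : ℕ} (hm : x + 2*(m:ℂ) = 0) {B : ℕ} (hBm : B ≤ m) : s B = 0 := by
  obtain ⟨d, rfl⟩ := Nat.exists_eq_add_of_le hBm
  clear hBm
  induction d generalizing B with
  | zero =>
    have h := hs B
    rw [Nat.add_zero] at hm
    rw [hm, zero_mul] at h
    exact (mul_eq_zero.1 h).resolve_left (hB B B le_rfl hm)
  | succ d ih =>
    have h := hs B
    rw [ih (B := B + 1) (by rwa [show B + 1 + d = B + (d + 1) by omega]), mul_zero] at h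
    exact (mul_eq_zero.1 h).resolve_left (hB _ B (by omega) hm)

theorem levels_eq_zero (hB : Nondegenerate x y) {s : ℕ → ℂ}
    (hs : ∀ B : ℕ, (y + 2*(B:ℂ)) * s B = (x + 2*(B:ℂ)) * s (B+1))
    {m : ℕ} (hm : x + 2*(m:ℂ) = 0) : ∀ k B, B + 2*k ≤ m → levels x y c s k B = 0 := by
  intro k
  induction k with
  | zero => exact fun B h => diagSeq_eq_zero_of_le hB hs hm (by omega)
  | succ k ih =>
    intro B h
    have hx : x + 2*((B:ℂ) + 1 + 2*k) ≠ 0 := by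
      intro hx
      have : ((B + 1 + 2*k : ℕ):ℂ) = m := by push_cast; linear_combination (hx - hm) / 2
      have := Nat.cast_injective this
      omega
    rw [levels, nextLevel_of_ne hx, solveR2, ih (B+1) (by omega), ih B (by omega)]
    simp

theorem levelR2_levels (hB : Nondegenerate x y) {s : ℕ → ℂ}
    (hs : ∀ B : ℕ, (y + 2*(B:ℂ)) * s B = (x + 2*(B:ℂ)) * s (B+1)) (k B : ℕ) :
    LevelR2 x y c (levels x y c s) k B := by
  by_cases hx : x + 2*((B:ℂ) + 1 + 2*k) = 0
  · have hm : x + 2*((B + 1 + 2*k : ℕ):ℂ) = 0 := by push_cast; exact hx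
    rw [LevelR2, hx, levels_eq_zero hB hs hm k (B+1) (by omega),
      levels_eq_zero hB hs hm k B (by omega)]
    ring
  · exact (levelR2_iff hx).2 (nextLevel_of_ne hx)

theorem levelR1_levels_zero {s : ℕ → ℂ}
    (hs : ∀ B : ℕ, (y + 2*(B:ℂ)) * s B = (x + 2*(B:ℂ)) * s (B+1)) (B : ℕ) :
    LevelR1 x y c (levels x y c s) 0 B := by
  rw [LevelR1, levels]
  push_cast
  linear_combination (2*(B:ℂ) + c) * hs B

theorem levelR1_succ (hc : ∀ m : ℕ, (m:ℂ) + c ≠ 0) {u : ℕ → ℕ → ℂ} {k B : ℕ}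
    (hx : x + 2*((B:ℂ) + 1 + 2*k) ≠ 0)
    (h1 : LevelR1 x y c u k B) (h1' : LevelR1 x y c u k (B+1))
    (h2 : LevelR2 x y c u k B) (h2' : LevelR2 x y c u k (B+1))
    (h2'' : LevelR2 x y c u (k-1) (B+1)) :
    LevelR1 x y c u (k+1) B := by
  have hC : (x + 2*((B:ℂ) + 1 + 2*k)) * (2*B + 4*k + c) * (2*k + 1) ≠ 0 :=
    mul_ne_zero (mul_ne_zero hx fun h => hc (2*B + 4*k) (by push_cast; linear_combination h))
      (by exact_mod_cast (2*k).succ_ne_zero)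
  -- `hC` times (R1) at level `k + 1` is a combination of the five given relations.
  unfold LevelR1 at h1 h1' ⊢
  unfold LevelR2 at h2 h2' h2''
  refine sub_eq_zero.1 ((mul_eq_zero.1 ?_).resolve_left hC)
  rw [Nat.add_sub_cancel]
  obtain _ | k := k
  · push_cast at h1 h1' h2 h2' ⊢
    linear_combination
      (x + 2*B + 2) * (2*B + c) * (2*B + 2 + c) * h2'
      - (y + 2*B) * (2*B + c) * (2*B + 4 + c) * h2
      + (y - 2*B - 2*c - 2) * (2*B + c) * (2*B + 4 + c) * h1'
      - (x - 2*B - 2 - 2*c) * (2*B + 1 + c) * (2*B + 4 + c) * h1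
  · rw [Nat.add_sub_cancel] at h2''
    push_cast at h1 h1' h2 h2' h2'' ⊢
    linear_combination
      (x + 2*B + 4*k + 6) * (2*B + 4*k + 4 + c) * (2*B + 2*k + 4 + c) * h2'
      - (y + 2*B) * (2*B + 4*k + 4 + c) * (2*B + 4*k + 8 + c) * h2
      + (x - 2*B - 4*k - 6 - 2*c) * (2*k + 2) * (2*B + 4*k + 8 + c) * h2''
      + (y - 2*B - 2*c - 2) * (2*B + 4*k + 4 + c) * (2*B + 4*k + 8 + c) * h1'
      - (x - 2*B - 4*k - 6 - 2*c) * (2*B + 2*k + 3 + c) * (2*B + 4*k + 8 + c) * h1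

theorem levelR1_levels (hB : Nondegenerate x y) (hc : ∀ m : ℕ, (m:ℂ) + c ≠ 0) {s : ℕ → ℂ}
    (hs : ∀ B : ℕ, (y + 2*(B:ℂ)) * s B = (x + 2*(B:ℂ)) * s (B+1)) :
    ∀ k B, LevelR1 x y c (levels x y c s) k B := by
  intro k
  induction k with
  | zero => exact levelR1_levels_zero hs
  | succ k ih =>
    intro B
    by_cases hx : x + 2*((B:ℂ) + 1 + 2*k) = 0
    · rw [levelR1_succ_iff (denomR1_ne_zero hB hc hx), levels, nextLevel_of_eq hx,
        nextLevel_of_ne (nextColumn_ne_zero hx)]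
    · exact levelR1_succ hc hx (ih B) (ih (B+1)) (levelR2_levels hB hs k B)
        (levelR2_levels hB hs k (B+1)) (levelR2_levels hB hs (k-1) (B+1))

end Levels

def ofLevels (u : ℕ → ℕ → ℂ) (α α' : ℕ) : ℂ :=
  if α' ≤ α ∧ Even (α + α') then u ((α - α') / 2) α' else 0

theorem ofLevels_of_eq_add {u : ℕ → ℕ → ℂ} {α B k : ℕ} (h : α = B + 2*k) :
    ofLevels u α B = u k B := by
  subst h
  rw [ofLevels, if_pos ⟨by omega, B + k, by ring⟩]
  congr
  omega

theorem ofLevels_eq_zero {u : ℕ → ℕ → ℂ} {α α' : ℕ} (h : α < α' ∨ Odd (α + α')) :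
    ofLevels u α α' = 0 := by
  rw [ofLevels, if_neg]
  rintro ⟨hle, heven⟩
  rcases h with h | h
  · omega
  · exact Nat.not_even_iff_odd.2 h heven

theorem two_mul_ofLevels_sub_one (u : ℕ → ℕ → ℂ) (k B : ℕ) :
    2*(k:ℂ) * ofLevels u (B + 2*k - 1) (B+1) = 2*(k:ℂ) * u (k-1) (B+1) := by
  obtain _ | k := k
  · simp
  · rw [ofLevels_of_eq_add (show B + 2*(k+1) - 1 = B + 1 + 2*k by omega), Nat.add_sub_cancel]

theorem ofLevels_toLevels {t : ℕ → ℕ → ℂ} (h : ∀ α α', (α < α' ∨ Odd (α + α')) → t α α' = 0) :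
    ofLevels (fun k B => t (B + 2*k) B) = t := by
  funext α α'
  rw [ofLevels]
  split_ifs with h'
  · obtain ⟨hle, j, hj⟩ := h'
    congr
    omega
  · rw [not_and_or, not_le, Nat.not_even_iff_odd] at h'
    exact (h α α' h').symm

theorem isAdmissible_ofLevels_iff {n : ℕ} {r r' : ℂ} {u : ℕ → ℕ → ℂ} :
    IsAdmissible n r r' (ofLevels u) ↔ ∀ k B,
      LevelR1 (2*r + n - 1) (2*r' + n - 2) (n - 2) u k B ∧
      LevelR2 (2*r + n - 1) (2*r' + n - 2) (n - 2) u k B := by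
  constructor
  · rintro ⟨-, h⟩ k B
    have h1 := (h (B + 2*k) B (by omega) ⟨B + k, by ring⟩).1
    have h2 := (h (B + 1 + 2*k) (B + 1) (by omega) ⟨B + 1 + k, by ring⟩).2 (by omega)
    rw [ofLevels_of_eq_add rfl, ofLevels_of_eq_add (show B + 2*k + 1 = B + 1 + 2*k by ring)] at h1
    rw [ofLevels_of_eq_add rfl, Nat.add_sub_cancel,
      ofLevels_of_eq_add (show B + 1 + 2*k + 1 = B + 2*(k+1) by ring),
      ofLevels_of_eq_add (show B + 1 + 2*k - 1 = B + 2*k by omega)] at h2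
    rw [LevelR1, LevelR2]
    push_cast at h1 h2 ⊢
    constructor
    · linear_combination h1 + (2*r - 2*(B + 2*k) - n + 3) * two_mul_ofLevels_sub_one u k B
    · linear_combination h2
  · intro h
    refine ⟨fun α α' h => ofLevels_eq_zero h, fun α α' hle heven => ?_⟩
    obtain ⟨k, rfl⟩ : ∃ k, α = α' + 2*k := ⟨(α - α') / 2, by obtain ⟨j, hj⟩ := heven; omega⟩
    refine ⟨?_, fun hα' => ?_⟩
    · have h1 := (h k α').1
      rw [LevelR1] at h1
      rw [ofLevels_of_eq_add rfl, ofLevels_of_eq_add (show α' + 2*k + 1 = α' + 1 + 2*k by ring)]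
      push_cast at h1 ⊢
      linear_combination h1 - (2*r - 2*(α' + 2*k) - n + 3) * two_mul_ofLevels_sub_one u k α'
    · obtain ⟨B, rfl⟩ : ∃ B, α' = B + 1 := ⟨α' - 1, by omega⟩
      have h2 := (h k B).2
      rw [LevelR2] at h2
      rw [ofLevels_of_eq_add rfl, Nat.add_sub_cancel,
        ofLevels_of_eq_add (show B + 1 + 2*k + 1 = B + 2*(k+1) by ring),
        ofLevels_of_eq_add (show B + 1 + 2*k - 1 = B + 2*k by omega)]
      push_cast at h2 ⊢
      linear_combination h2

theorem nondegenerate_of_not_mem {n : ℕ} {r r' : ℂ} (hL : (r, r') ∉ Leven n ∪ Lodd n) :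
    Nondegenerate (2*r + n - 1) (2*r' + n - 2) := by
  intro i j hji hi hj
  apply hL
  have hr : r = -rho n - i := by rw [rho]; linear_combination hi / 2
  have hr' : r' = -rho' n - j := by rw [rho']; linear_combination hj / 2
  obtain ⟨k, hk | hk⟩ := Nat.even_or_odd' (i - j)
  · exact Or.inl ⟨i, j, hr, hr', k, by omega⟩
  · exact Or.inr ⟨i, j, hr, hr', k, by omega⟩

end Admissible

open Admissible

theorem statement2 (n : ℕ) (hn : 3 ≤ n) (r r' : ℂ)
    (hL : (r, r') ∉ Leven n ∪ Lodd n) :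
    ∀ s : ℕ → ℂ, IsDiagSeq n r r' s →
      ∃! t : ℕ → ℕ → ℂ, IsAdmissible n r r' t ∧ ∀ α : ℕ, t α α = s α := by
  intro s hs
  have hB := nondegenerate_of_not_mem hL
  have hc : ∀ m : ℕ, (m:ℂ) + ((n:ℂ) - 2) ≠ 0 := fun m h => by
    have : ((m + n : ℕ) : ℂ) = 2 := by push_cast; linear_combination h
    norm_cast at this
    omega
  have hs' : ∀ B : ℕ, (2*r' + n - 2 + 2*(B:ℂ)) * s B = (2*r + n - 1 + 2*(B:ℂ)) * s (B+1) :=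
    fun B => by linear_combination hs B
  refine ⟨ofLevels (levels _ _ _ s), ⟨isAdmissible_ofLevels_iff.2 fun k B =>
    ⟨levelR1_levels hB hc hs' k B, levelR2_levels hB hs' k B⟩,
    fun α => ofLevels_of_eq_add (k := 0) rfl⟩, ?_⟩
  rintro t ⟨ht, hdiag⟩
  have hlev := isAdmissible_ofLevels_iff.1 ((ofLevels_toLevels ht.1).symm ▸ ht)
  calc t = ofLevels (fun k B => t (B + 2*k) B) := (ofLevels_toLevels ht.1).symm
    _ = ofLevels (levels _ _ _ s) := by
      rw [eq_levels hB hc (fun k B => (hlev k B).1) (fun k B => (hlev k B).2)]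
      simp [hdiag]
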